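/- arXiv:1807.11169 — 11 statements merged into one kernel-verified Lean document; each statement's English description precedes it below -/
import Mathlib

section
/- Let f : ℕ → ℝ be defined on positive integers by f(n) = (1/2)·(k - 1 + n/2^k) where k = ⌊log₂ n⌋. Then for all positive integers n₁, n₂ with n = n₁ + n₂ and any p₁, p₂ ≥ 0 with p₁ + p₂ = 1, we have f(n) ≥ 1 - max(p₁,p₂) + p₁·f(n₁) + p₂·f(n₂). -/
/-!
`2 * perfectLoss` is the piecewise-linear interpolation `G` of `log₂` at the powers of two. Being
concave, `G` is the pointwise minimum of its chords `j - 1 + x / 2 ^ j`, which gives monotonicity and,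
using the chord `j = ⌊log₂ (a + b)⌋ - 1` at `a` and at `b`, the midpoint inequality
`1 + f a + f b ≤ 2 f (a + b)` (midpoint concavity together with `G (2x) = G x + 1`).
The right-hand side of the theorem is concave and piecewise linear in `p₁`, with its kink at `1/2`,
so these two inequalities (the cases `p₁ ∈ {0, 1/2, 1}`) suffice.
-/

noncomputable def perfectLoss (n : ℕ) : ℝ :=
  ((Nat.log 2 n : ℝ) - 1 + (n : ℝ) / 2 ^ (Nat.log 2 n)) / 2

/-- Half the chord of `log₂` over `[2 ^ j, 2 ^ (j + 1)]`. -/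
noncomputable def perfectLossChord (j : ℕ) (x : ℝ) : ℝ := ((j : ℝ) - 1 + x / 2 ^ j) / 2

lemma perfectLoss_eq_chord (n : ℕ) : perfectLoss n = perfectLossChord (Nat.log 2 n) n := rfl

lemma perfectLossChord_mono (j : ℕ) : Monotone (perfectLossChord j) := fun x y hxy => by
  unfold perfectLossChord; gcongr

lemma perfectLoss_le_chord (n j : ℕ) : perfectLoss n ≤ perfectLossChord j n := by
  -- With `x = n / 2 ^ k ∈ [1, 2)`, both cases `k ≤ j` and `j < k` reduce to Bernoulli's inequality.
  unfold perfectLoss perfectLossChord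
  obtain ⟨k, hk⟩ : ∃ k, Nat.log 2 n = k := ⟨_, rfl⟩
  have hx2 : (n : ℝ) / 2 ^ k < 2 := by
    rw [div_lt_iff₀ (by positivity), ← pow_succ', ← hk]
    exact_mod_cast Nat.lt_pow_succ_log_self one_lt_two n
  rw [hk]
  rcases le_or_gt k j with hkj | hjk
  · obtain ⟨d, rfl⟩ := Nat.exists_eq_add_of_le hkj
    have hsplit : (n : ℝ) / 2 ^ (k + d) = n / 2 ^ k * (1 / 2) ^ d := by
      rw [pow_add, one_div_pow, div_mul_div_comm, mul_one]
    have bernoulli := one_add_mul_le_pow (a := (-1 / 2 : ℝ)) (by norm_num) d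
    have hhalf : (1 / 2 : ℝ) ^ d ≤ 1 := pow_le_one₀ (by norm_num) (by norm_num)
    have hx0 : 0 ≤ (n : ℝ) / 2 ^ k := by positivity
    rw [hsplit]; push_cast; norm_num at bernoulli; nlinarith
  · obtain ⟨d, rfl⟩ : ∃ d, k = j + (d + 1) := ⟨k - j - 1, by omega⟩
    have hn : n ≠ 0 := by rintro rfl; simp at hk
    have hx1 : 1 ≤ (n : ℝ) / 2 ^ (j + (d + 1)) := by
      rw [one_le_div (by positivity), ← hk]; exact_mod_cast Nat.pow_log_le_self 2 hn
    have hsplit : (n : ℝ) / 2 ^ j = n / 2 ^ (j + (d + 1)) * 2 ^ (d + 1) := by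
      rw [pow_add, div_mul_eq_div_div, div_mul_cancel₀ _ (by positivity)]
    have bernoulli : ((d + 1 : ℕ) : ℝ) + 1 ≤ 2 ^ (d + 1) := by
      exact_mod_cast Nat.lt_two_pow_self
    rw [hsplit]; push_cast at bernoulli ⊢; nlinarith

lemma perfectLoss_mono : Monotone perfectLoss := fun m n hmn =>
  calc perfectLoss m ≤ perfectLossChord (Nat.log 2 n) m := perfectLoss_le_chord m _
    _ ≤ perfectLossChord (Nat.log 2 n) n := perfectLossChord_mono _ (Nat.cast_le.mpr hmn)
    _ = perfectLoss n := (perfectLoss_eq_chord n).symm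

lemma one_add_perfectLoss_add_perfectLoss_le {a b : ℕ} (h : 2 ≤ a + b) :
    1 + perfectLoss a + perfectLoss b ≤ 2 * perfectLoss (a + b) := by
  obtain ⟨j, hj⟩ : ∃ j, Nat.log 2 (a + b) = j + 1 :=
    Nat.exists_eq_add_one.mpr (Nat.log_pos one_lt_two h)
  calc 1 + perfectLoss a + perfectLoss b ≤ 1 + perfectLossChord j a + perfectLossChord j b := by
        gcongr <;> exact perfectLoss_le_chord _ _
    _ = 2 * perfectLoss (a + b) := by
        rw [perfectLoss_eq_chord, hj, perfectLossChord, perfectLossChord, perfectLossChord]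
        push_cast; ring

theorem stmt_1 (n n₁ n₂ : ℕ) (h₁ : 1 ≤ n₁) (h₂ : 1 ≤ n₂) (hn : n = n₁ + n₂)
    (p₁ p₂ : ℝ) (hp₁ : 0 ≤ p₁) (hp₂ : 0 ≤ p₂) (hp : p₁ + p₂ = 1) :
    perfectLoss n ≥ 1 - max p₁ p₂ + p₁ * perfectLoss n₁ + p₂ * perfectLoss n₂ := by
  subst hn
  have hmid := one_add_perfectLoss_add_perfectLoss_le (a := n₁) (b := n₂) (by omega)
  have hmono₁ := perfectLoss_mono (Nat.le_add_right n₁ n₂)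
  have hmono₂ := perfectLoss_mono (Nat.le_add_left n₂ n₁)
  have hF : perfectLoss (n₁ + n₂) = (p₁ + p₂) * perfectLoss (n₁ + n₂) := by rw [hp, one_mul]
  rcases le_total p₁ p₂ with h | h
  · rw [max_eq_right h]
    linarith [mul_le_mul_of_nonneg_left hmid hp₁,
      mul_le_mul_of_nonneg_left hmono₂ (sub_nonneg.mpr h)]
  · rw [max_eq_left h]
    linarith [mul_le_mul_of_nonneg_left hmid hp₂,
      mul_le_mul_of_nonneg_left hmono₁ (sub_nonneg.mpr h)]
end

section
/- Let f : ℕ → ℝ be defined on positive integers by f(n) = (1/2)·(k - 1 + n/2^k) where k = ⌊log₂ n⌋. Then for every a ≥ 1, all positive integers n₁, …, n_a with n = n₁ + ⋯ + n_a, and every probability vector (p₁, …, p_a) (nonnegative reals summing to 1), f(n) ≥ 1 - max_i p_i + Σ_i p_i · f(n_i). -/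
noncomputable def perfectLossLine (k : ℕ) (x : ℝ) : ℝ :=
  ((k : ℝ) - 1 + x / 2 ^ k) / 2

lemma perfectLoss_eq_perfectLossLine (n : ℕ) : perfectLoss n = perfectLossLine (Nat.log 2 n) n :=
  rfl

lemma perfectLossLine_mono (k : ℕ) : Monotone (perfectLossLine k) := by
  intro x y hxy
  unfold perfectLossLine
  gcongr

lemma perfectLossLine_succ_sub (k : ℕ) (x : ℝ) :
    perfectLossLine (k + 1) x - perfectLossLine k x = (1 - x / 2 ^ (k + 1)) / 2 := by
  unfold perfectLossLine
  push_cast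
  field_simp
  ring

lemma perfectLossLine_succ_add (k : ℕ) (x y : ℝ) :
    perfectLossLine (k + 1) (x + y) = 1 / 2 + (perfectLossLine k x + perfectLossLine k y) / 2 := by
  unfold perfectLossLine
  push_cast
  field_simp
  ring

lemma perfectLoss_le_perfectLossLine (n k : ℕ) : perfectLoss n ≤ perfectLossLine k n := by
  rw [perfectLoss_eq_perfectLossLine]
  rcases le_total (Nat.log 2 n) k with hk | hk
  · induction k, hk using Nat.le_induction with
    | base => rfl
    | succ i hi ih =>
      have hn : (n : ℝ) ≤ 2 ^ (i + 1) := by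
        exact_mod_cast (Nat.lt_pow_succ_log_self one_lt_two n).le.trans
          (Nat.pow_le_pow_right two_pos (by omega))
      have hx : n / (2 : ℝ) ^ (i + 1) ≤ 1 := div_le_one_of_le₀ hn (by positivity)
      linarith [perfectLossLine_succ_sub i n]
  · induction hk using Nat.decreasingInduction with
    | self => rfl
    | of_succ i hi ih =>
      have hn0 : n ≠ 0 := by
        rintro rfl
        simp at hi
      have hn : (2 : ℝ) ^ (i + 1) ≤ n := by
        exact_mod_cast (Nat.pow_le_pow_right two_pos hi).trans (Nat.pow_log_le_self 2 hn0)
      have hx : 1 ≤ n / (2 : ℝ) ^ (i + 1) := (one_le_div₀ (by positivity)).2 hn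
      linarith [perfectLossLine_succ_sub i n]

lemma one_add_perfectLoss_add_le {m n : ℕ} (h : 2 ≤ m + n) :
    1 + perfectLoss m + perfectLoss n ≤ 2 * perfectLoss (m + n) := by
  obtain ⟨k, hk⟩ : ∃ k, Nat.log 2 (m + n) = k + 1 :=
    ⟨Nat.log 2 (m + n) - 1, by have := Nat.log_pos one_lt_two h; omega⟩
  rw [perfectLoss_eq_perfectLossLine (m + n), hk, Nat.cast_add, perfectLossLine_succ_add]
  linarith [perfectLoss_le_perfectLossLine m k, perfectLoss_le_perfectLossLine n k]

lemma add_sub_sup_add_le_perfectLoss_add {m n : ℕ} (hm : 1 ≤ m) (hn : 1 ≤ n) {q r : ℝ}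
    (hq : 0 ≤ q) (hr : 0 ≤ r) :
    q + r - q ⊔ r + q * perfectLoss m + r * perfectLoss n ≤ (q + r) * perfectLoss (m + n) := by
  have hsplit := one_add_perfectLoss_add_le (m := m) (n := n) (by omega)
  have hmono_m := perfectLoss_mono (Nat.le_add_right m n)
  have hmono_n := perfectLoss_mono (Nat.le_add_left n m)
  rcases le_total q r with h | h
  · rw [sup_eq_right.2 h]
    nlinarith [mul_le_mul_of_nonneg_left hmono_n (sub_nonneg.2 h)]
  · rw [sup_eq_left.2 h]
    nlinarith [mul_le_mul_of_nonneg_left hmono_m (sub_nonneg.2 h)]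

theorem sum_sub_sup'_add_le_perfectLoss_sum {ι : Type*} (s : Finset ι) (hs : s.Nonempty)
    (n : ι → ℕ) (hn : ∀ i ∈ s, 1 ≤ n i) (p : ι → ℝ) (hp : ∀ i ∈ s, 0 ≤ p i) :
    ∑ i ∈ s, p i - s.sup' hs p + ∑ i ∈ s, p i * perfectLoss (n i) ≤
      (∑ i ∈ s, p i) * perfectLoss (∑ i ∈ s, n i) := by
  induction hs using Finset.Nonempty.cons_induction with
  | singleton i => simp
  | cons i s _ hs ih =>
    simp only [Finset.forall_mem_cons] at hn hp
    simp only [Finset.sum_cons, Finset.sup'_cons hs]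
    have hsum_n : 1 ≤ ∑ j ∈ s, n j := by
      obtain ⟨j, hj⟩ := hs
      exact (hn.2 j hj).trans (Finset.single_le_sum (fun _ _ => Nat.zero_le _) hj)
    have hsup_le : s.sup' hs p ≤ ∑ j ∈ s, p j :=
      Finset.sup'_le hs p fun j hj => Finset.single_le_sum hp.2 hj
    have hpair := add_sub_sup_add_le_perfectLoss_add hn.1 hsum_n hp.1 (Finset.sum_nonneg hp.2)
    -- `x ↦ p i ⊔ x - x` is antitone
    have hsup : p i ⊔ ∑ j ∈ s, p j ≤ p i ⊔ s.sup' hs p + (∑ j ∈ s, p j - s.sup' hs p) :=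
      sup_le (by linarith [le_sup_left (a := p i) (b := s.sup' hs p)])
        (by linarith [le_sup_right (a := p i) (b := s.sup' hs p)])
    linarith [ih hn.2 hp.2]

theorem stmt_2 (a : ℕ) (ha : 1 ≤ a) (n : Fin a → ℕ) (hn : ∀ i, 1 ≤ n i)
    (p : Fin a → ℝ) (hp : ∀ i, 0 ≤ p i) (hps : ∑ i, p i = 1) :
    perfectLoss (∑ i, n i) ≥
      1 - Finset.univ.sup' ⟨⟨0, ha⟩, Finset.mem_univ _⟩ p + ∑ i, p i * perfectLoss (n i) := by
  have h := sum_sub_sup'_add_le_perfectLoss_sum Finset.univ ⟨⟨0, ha⟩, Finset.mem_univ _⟩ n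
    (fun i _ => hn i) p (fun i _ => hp i)
  rwa [hps, one_mul] at h
end

section
/- Let b ≥ 0 and c > 1 be real, and let γ = (2c/(c+1))². Define, for a nonzero vector (k₀,…,k_b) of natural numbers, f(k₀,…,k_b) = log_γ(Σ_{i=0}^{b} c^{b-i}·k_i). Then for every such vector, (1/2) + f(k₀/2, (k₀+k₁)/2, (k₁+k₂)/2, …, (k_{b-1}+k_b)/2) ≤ f(k₀,…,k_b), where the left-hand side is f evaluated at the real vector obtained by halving and shifting. -/
/-!
Write `W(x) = ∑ᵢ c^(b-i) xᵢ` and `y` for the halved shift of `x`. Every `xᵢ` with `i < b`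
reappears in `y` one level lower, which gives the exact identity `2c·W(y) + x_b = (c+1)·W(x)`.
Hence `W(y) ≤ W(x)/r` with `r = 2c/(c+1)`, and since `γ = r²` dividing by `r` lowers
`log_γ` by exactly `1/2`.
-/

namespace HalfShift

variable {K : Type*} [Field K] {b : ℕ}

/-- `W(x)` above; the paper's `f` is `log_γ ∘ weightedSum c`. -/
def weightedSum (c : K) (x : Fin (b + 1) → K) : K :=
  ∑ i : Fin (b + 1), c ^ (b - (i : ℕ)) * x i

def halfShift (x : Fin (b + 1) → K) (i : Fin (b + 1)) : K :=
  if (i : ℕ) = 0 then x 0 / 2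
  else (x ⟨(i : ℕ) - 1, lt_of_le_of_lt (Nat.sub_le _ 1) i.isLt⟩ + x i) / 2

theorem weightedSum_eq_mul_sum_castSucc_add_last (c : K) (x : Fin (b + 1) → K) :
    weightedSum c x = c * ∑ i : Fin b, c ^ (b - ((i : ℕ) + 1)) * x i.castSucc + x (Fin.last b) := by
  rw [weightedSum, Fin.sum_univ_castSucc, Finset.mul_sum]
  congr 1
  · refine Finset.sum_congr rfl fun i _ => ?_
    rw [← mul_assoc, ← pow_succ', Fin.val_castSucc, Nat.sub_add_eq, Nat.sub_add_cancel]
    exact Nat.le_sub_of_add_le' i.isLt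
  · simp

theorem two_mul_weightedSum_halfShift [CharZero K] (c : K) (x : Fin (b + 1) → K) :
    2 * weightedSum c (halfShift x) =
      weightedSum c x + ∑ i : Fin b, c ^ (b - ((i : ℕ) + 1)) * x i.castSucc := by
  have hsucc : ∀ i : Fin b, c ^ (b - ((i.succ : Fin (b + 1)) : ℕ)) * halfShift x i.succ =
      (c ^ (b - ((i : ℕ) + 1)) * x i.castSucc + c ^ (b - ((i : ℕ) + 1)) * x i.succ) / 2 := by
    intro i
    have hprev : (⟨((i.succ : Fin (b + 1)) : ℕ) - 1, lt_of_le_of_lt (Nat.sub_le _ 1)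
        (i.succ).isLt⟩ : Fin (b + 1)) = i.castSucc := by ext; simp
    rw [halfShift, if_neg (by simp), hprev, Fin.val_succ]
    ring
  rw [weightedSum, weightedSum, Fin.sum_univ_succ, Fin.sum_univ_succ, Finset.sum_congr rfl
    fun i _ => hsucc i, ← Finset.sum_div, Finset.sum_add_distrib]
  simp only [halfShift, Fin.val_zero, Fin.val_succ, if_true, Nat.sub_zero]
  ring

theorem two_mul_mul_weightedSum_halfShift_add_last [CharZero K] (c : K) (x : Fin (b + 1) → K) :
    2 * c * weightedSum c (halfShift x) + x (Fin.last b) = (c + 1) * weightedSum c x := by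
  linear_combination c * two_mul_weightedSum_halfShift c x -
    weightedSum_eq_mul_sum_castSucc_add_last c x

theorem weightedSum_pos {c : ℝ} (hc : 0 < c) {x : Fin (b + 1) → ℝ} (hx : 0 ≤ x) (hx₀ : x ≠ 0) :
    0 < weightedSum c x := by
  obtain ⟨j, hj⟩ := Function.ne_iff.mp hx₀
  exact Finset.sum_pos' (fun i _ => mul_nonneg (by positivity) (hx i))
    ⟨j, Finset.mem_univ _, mul_pos (by positivity) ((hx j).lt_of_ne' hj)⟩

theorem weightedSum_halfShift_mul_le {c : ℝ} (hc : 0 < c) {x : Fin (b + 1) → ℝ}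
    (hx : 0 ≤ x (Fin.last b)) : weightedSum c (halfShift x) * (2 * c / (c + 1)) ≤ weightedSum c x := by
  have hid := two_mul_mul_weightedSum_halfShift_add_last c x
  rw [mul_div_assoc', div_le_iff₀ (by linarith)]
  linarith

theorem weightedSum_le_two_mul_weightedSum_halfShift {c : ℝ} (hc : 0 ≤ c) {x : Fin (b + 1) → ℝ}
    (hx : 0 ≤ x) : weightedSum c x ≤ 2 * weightedSum c (halfShift x) := by
  rw [two_mul_weightedSum_halfShift, le_add_iff_nonneg_right]
  exact Finset.sum_nonneg fun i _ => mul_nonneg (pow_nonneg hc _) (hx _)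

end HalfShift

theorem Real.logb_sq_self {r : ℝ} (hr₀ : 0 < r) (hr₁ : r ≠ 1) : Real.logb (r ^ 2) r = 1 / 2 := by
  have hlog : Real.log r ≠ 0 := Real.log_ne_zero_of_pos_of_ne_one hr₀ hr₁
  rw [Real.logb, Real.log_pow]
  field_simp
  norm_num

open HalfShift in
theorem stmt_4 (b : ℕ) (c : ℝ) (hc : 1 < c) (k : Fin (b + 1) → ℕ)
    (hk : k ≠ 0) :
    (1 : ℝ) / 2 +
      Real.logb ((2 * c / (c + 1)) ^ 2)
        (∑ i : Fin (b + 1), c ^ (b - (i : ℕ)) *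
          (if (i : ℕ) = 0 then (k 0 : ℝ) / 2
           else ((k ⟨(i : ℕ) - 1, lt_of_le_of_lt (Nat.sub_le _ 1) i.isLt⟩ : ℝ) + (k i : ℝ)) / 2))
    ≤ Real.logb ((2 * c / (c + 1)) ^ 2) (∑ i : Fin (b + 1), c ^ (b - (i : ℕ)) * (k i : ℝ)) := by
  set x : Fin (b + 1) → ℝ := fun i => (k i : ℝ)
  set r := 2 * c / (c + 1)
  change 1 / 2 + Real.logb (r ^ 2) (weightedSum c (halfShift x)) ≤ Real.logb (r ^ 2) (weightedSum c x)
  have hx : 0 ≤ x := fun i => Nat.cast_nonneg _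
  have hr : 1 < r := by rw [lt_div_iff₀ (by linarith)]; linarith
  have hW : 0 < weightedSum c x :=
    weightedSum_pos (by linarith) hx fun h => hk (funext fun i => by simpa [x] using congrFun h i)
  have hWy : 0 < weightedSum c (halfShift x) := by
    have := weightedSum_le_two_mul_weightedSum_halfShift (by linarith : (0 : ℝ) ≤ c) hx
    linarith
  have hle : weightedSum c (halfShift x) ≤ weightedSum c x / r :=
    (le_div_iff₀ (by linarith)).2 (weightedSum_halfShift_mul_le (by linarith) (hx _))
  calc 1 / 2 + Real.logb (r ^ 2) (weightedSum c (halfShift x))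
      ≤ Real.logb (r ^ 2) r + Real.logb (r ^ 2) (weightedSum c x / r) := by
        rw [Real.logb_sq_self (by linarith) hr.ne']
        gcongr
        exact one_lt_pow₀ hr two_ne_zero
    _ = Real.logb (r ^ 2) (weightedSum c x) := by
        rw [Real.logb_div hW.ne' (by linarith)]
        ring
end

section
/- For every real c > 1 and every real x with 0 < x ≤ 1/2, (2c/(c+1))^{2(1-x)} · (1 + (c-1)x) ≤ c. -/
/-!
Write `γ = 2c/(c+1)` and `y = (c-1)x`. Splitting `γ^(2(1-x)) = γ · γ^(1-2x)` and bounding the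
second factor by Bernoulli's inequality (the exponent lies in `[0, 1]`) gives
`γ^(2(1-x)) (1 + y) ≤ 4c (c - y)(1 + y) / (c+1)²`, and `(c - y)(1 + y) ≤ ((c+1)/2)²` by AM-GM.
-/

theorem Real.rpow_le_mul_one_add_mul_sub_one {b p : ℝ} (hb : 0 < b) (hp1 : 1 ≤ p) (hp2 : p ≤ 2) :
    b ^ p ≤ b * (1 + (p - 1) * (b - 1)) := by
  have hbernoulli : b ^ (p - 1) ≤ 1 + (p - 1) * (b - 1) := by
    simpa using rpow_one_add_le_one_add_mul_self (s := b - 1) (by linarith) (by linarith)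
      (by linarith : p - 1 ≤ 1)
  calc b ^ p = b * b ^ (p - 1) := by
        rw [← Real.rpow_one_add' hb.le (by linarith)]; ring_nf
    _ ≤ b * (1 + (p - 1) * (b - 1)) := mul_le_mul_of_nonneg_left hbernoulli hb.le

theorem stmt_5 (c x : ℝ) (hc : 1 < c) (hx0 : 0 < x) (hx : x ≤ 1 / 2) :
    (2 * c / (c + 1)) ^ (2 * (1 - x)) * (1 + (c - 1) * x) ≤ c := by
  have hc1 : 0 < c + 1 := by linarith
  set γ := 2 * c / (c + 1)
  have hγ : 0 < γ := by positivity
  have hy : 0 ≤ 1 + (c - 1) * x := by nlinarith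
  calc γ ^ (2 * (1 - x)) * (1 + (c - 1) * x)
      ≤ γ * (1 + (2 * (1 - x) - 1) * (γ - 1)) * (1 + (c - 1) * x) :=
        mul_le_mul_of_nonneg_right
          (Real.rpow_le_mul_one_add_mul_sub_one hγ (by linarith) (by linarith)) hy
    _ = c * (4 * (c - (c - 1) * x) * (1 + (c - 1) * x)) / (c + 1) ^ 2 := by
        simp only [γ]; field_simp; ring
    _ ≤ c := by
        rw [div_le_iff₀ (by positivity)]
        have hamgm := four_mul_le_sq_add (c - (c - 1) * x) (1 + (c - 1) * x)
        have hsum : c - (c - 1) * x + (1 + (c - 1) * x) = c + 1 := by ring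
        rw [hsum] at hamgm
        exact mul_le_mul_of_nonneg_left hamgm (by linarith)
end

section
/- Let c > 1 be real and γ = (2c/(c+1))². Then for every integer a ≥ 2, γ^{(a-1)/a} · (c/a + (a-1)/a) ≤ c. -/
/-!
Write `x = 2c/(c+1)`, so that `γ = x²` and `c = x (c+1)/2`, and put `s = (a-2)/a ∈ [0, 1)`.
Then `γ^((a-1)/a) = x · x^s` and `c/a + (a-1)/a = (c+1)/2 · (1 - s (x-1))`, so the inequality
reduces to `x^s (1 - s (x-1)) ≤ 1`. This follows from Bernoulli's inequality
`x^s ≤ 1 + s (x-1)` for `0 ≤ s ≤ 1`, since `(1 + u)(1 - u) ≤ 1`.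
-/

open Real

theorem rpow_mul_one_sub_mul_sub_one_le_one {x s : ℝ} (hx : 0 ≤ x) (hs₀ : 0 ≤ s) (hs₁ : s ≤ 1) :
    x ^ s * (1 - s * (x - 1)) ≤ 1 := by
  rcases lt_or_ge (1 - s * (x - 1)) 0 with hneg | hnonneg
  · nlinarith [rpow_nonneg hx s]
  · have bernoulli : x ^ s ≤ 1 + s * (x - 1) := by
      simpa using rpow_one_add_le_one_add_mul_self (s := x - 1) (by linarith) hs₀ hs₁
    calc x ^ s * (1 - s * (x - 1)) ≤ (1 + s * (x - 1)) * (1 - s * (x - 1)) :=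
          mul_le_mul_of_nonneg_right bernoulli hnonneg
      _ ≤ 1 := by nlinarith [sq_nonneg (s * (x - 1))]

theorem two_mul_div_add_one_sq_rpow_mul_le {c a : ℝ} (hc : 0 ≤ c) (ha : 2 ≤ a) :
    ((2 * c / (c + 1)) ^ 2) ^ ((a - 1) / a) * (c / a + (a - 1) / a) ≤ c := by
  have ha₀ : 0 < a := by linarith
  set x := 2 * c / (c + 1) with hx_def
  set s := (a - 2) / a with hs_def
  have hx : 0 ≤ x := by positivity
  have hs₀ : 0 ≤ s := div_nonneg (by linarith) ha₀.le
  have hpow : (x ^ 2) ^ ((a - 1) / a) = x * x ^ s := by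
    have hexp : ((2 : ℕ) : ℝ) * ((a - 1) / a) = 1 + s := by
      rw [hs_def]; field_simp; ring
    rw [← rpow_natCast, ← rpow_mul hx, hexp, rpow_add' hx (by linarith), rpow_one]
  have hmean : c / a + (a - 1) / a = (c + 1) / 2 * (1 - s * (x - 1)) := by
    rw [hx_def, hs_def]; field_simp; ring
  calc (x ^ 2) ^ ((a - 1) / a) * (c / a + (a - 1) / a)
      = x ^ s * (1 - s * (x - 1)) * (x * ((c + 1) / 2)) := by rw [hpow, hmean]; ring
    _ ≤ 1 * (x * ((c + 1) / 2)) := by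
        refine mul_le_mul_of_nonneg_right
          (rpow_mul_one_sub_mul_sub_one_le_one hx hs₀ ?_) (by positivity)
        rw [hs_def, div_le_one ha₀]; linarith
    _ = c := by rw [hx_def]; field_simp

theorem stmt_8 (c : ℝ) (hc : 1 < c) (a : ℕ) (ha : 2 ≤ a) :
    ((2 * c / (c + 1)) ^ 2) ^ (((a : ℝ) - 1) / (a : ℝ)) * (c / (a : ℝ) + ((a : ℝ) - 1) / (a : ℝ)) ≤ c :=
  two_mul_div_add_one_sq_rpow_mul_le (by linarith) (by exact_mod_cast ha)
end

section
/- For every integer n ≥ 2, with c = log₂(4n+4)/ln 4 and γ = (2c/(c+1))², we have log₂ γ ≥ 1/(1/2 + 1/log₂(n+1)). -/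
/-!
Write `L = log₂(n+1)`, so that `log₂(4n+4) = L + 2` and `c = (L+2)/(2 ln 2)`. Then
`log₂ γ = 2 (1 - log₂((c+1)/c))`, and `ln(1 + 1/c) ≤ 1/c` gives `log₂((c+1)/c) ≤ 1/(c ln 2) = 2/(L+2)`,
whence `log₂ γ ≥ 2L/(L+2) = 1/(1/2 + 1/L)`.
-/

namespace Real

lemma logb_add_one_div_self_le {b c : ℝ} (hb : 1 < b) (hc : 0 < c) :
    logb b ((c + 1) / c) ≤ 1 / (c * log b) := by
  have hlog : log ((c + 1) / c) ≤ 1 / c :=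
    calc log ((c + 1) / c) ≤ (c + 1) / c - 1 := log_le_sub_one_of_pos (by positivity)
      _ = 1 / c := by field_simp; ring
  rw [logb, ← div_div]
  exact div_le_div_of_nonneg_right hlog (log_nonneg hb.le)

lemma logb_two_sq_two_mul_div_add_one {c : ℝ} (hc : 0 < c) :
    logb 2 ((2 * c / (c + 1)) ^ 2) = 2 * (1 - logb 2 ((c + 1) / c)) := by
  have hquot : 2 * c / (c + 1) = 2 / ((c + 1) / c) := by field_simp
  rw [hquot, logb_pow, logb_div two_ne_zero (by positivity), logb_self_eq_one one_lt_two]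
  push_cast
  ring

lemma logb_two_four_mul_add_four {x : ℝ} (hx : 0 < x + 1) :
    logb 2 (4 * x + 4) = logb 2 (x + 1) + 2 := by
  have hfour : logb 2 4 = 2 := by
    rw [show (4 : ℝ) = 2 ^ 2 by norm_num, logb_pow, logb_self_eq_one one_lt_two]
    norm_num
  rw [show 4 * x + 4 = 4 * (x + 1) by ring, logb_mul four_ne_zero hx.ne', hfour, add_comm]

end Real

open Real in
theorem stmt_10 (n : ℕ) (hn : 2 ≤ n) :
    Real.logb 2 ((2 * (Real.logb 2 (4 * n + 4) / Real.log 4) /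
        ((Real.logb 2 (4 * n + 4) / Real.log 4) + 1)) ^ 2)
      ≥ 1 / (1 / 2 + 1 / Real.logb 2 (n + 1)) := by
  set L := logb 2 ((n : ℝ) + 1)
  have hL : 0 < L := logb_pos one_lt_two (by norm_cast; omega)
  have hlog4 : log 4 = 2 * log 2 := by
    rw [show (4 : ℝ) = 2 ^ 2 by norm_num, log_pow, Nat.cast_ofNat]
  have hlog2 : 0 < log 2 := log_pos one_lt_two
  rw [logb_two_four_mul_add_four (by positivity)]
  have hc : 0 < (L + 2) / log 4 := by positivity
  calc 1 / (1 / 2 + 1 / L) = 2 * (1 - 1 / ((L + 2) / log 4 * log 2)) := by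
        rw [hlog4]
        field_simp
        ring
    _ ≤ 2 * (1 - logb 2 (((L + 2) / log 4 + 1) / ((L + 2) / log 4))) := by
        gcongr
        exact logb_add_one_div_self_le one_lt_two hc
    _ = _ := (logb_two_sq_two_mul_div_add_one hc).symm
end

section
/- For all integers n ≥ 8 and all integers b with 1 ≤ b < (ln n)/2, setting c = log₂(n)/b and γ = (2c/(c+1))², we have 1/log₂(2c/(c+1)) ≤ 1 + b/ln(n) + 2b²/(ln n)². -/
/-!
Writing `c = log₂ n / b`, we have `log₂ (2c/(c+1)) = 1 - log₂ (1 + 1/c) ≥ 1 - 1/(c ln 2) = 1 - x`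
with `x = b / ln n < 1/2`, by `ln (1 + t) ≤ t`. Finally `1/(1 - x) ≤ 1 + x + 2x²` because
`(1 + x + 2x²)(1 - x) = 1 + x²(1 - 2x)`.
-/

open Real

lemma one_sub_inv_mul_log_two_le_logb_two_mul_div {c : ℝ} (hc : 0 < c) :
    1 - 1 / (c * log 2) ≤ logb 2 (2 * c / (c + 1)) := by
  have hlog : log ((c + 1) / c) ≤ 1 / c := by
    have h := log_le_sub_one_of_pos (show 0 < (c + 1) / c by positivity)
    have : (c + 1) / c - 1 = 1 / c := by field_simp; ring
    linarith
  have hsplit : logb 2 (2 * c / (c + 1)) = 1 - log ((c + 1) / c) / log 2 := by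
    rw [logb, log_div (by positivity) (by positivity), log_mul two_ne_zero hc.ne',
      log_div (by positivity) hc.ne']
    field_simp
    ring
  have hlog2 : 0 < log 2 := log_pos one_lt_two
  rw [hsplit, ← div_div]
  gcongr

lemma one_div_one_sub_le_one_add_add_two_mul_sq {x : ℝ} (hx : x ≤ 1 / 2) :
    1 / (1 - x) ≤ 1 + x + 2 * x ^ 2 := by
  rw [div_le_iff₀ (by linarith)]
  nlinarith

theorem stmt_12_general (n b : ℕ) (hb : 1 ≤ b) (hbn : (b : ℝ) < Real.log n / 2) :
    1 / Real.logb 2 (2 * (Real.logb 2 n / b) / ((Real.logb 2 n / b) + 1))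
      ≤ 1 + (b : ℝ) / Real.log n + 2 * (b : ℝ) ^ 2 / (Real.log n) ^ 2 := by
  have hb₀ : (0 : ℝ) < b := by exact_mod_cast hb
  have hL : 0 < log n := by linarith
  have hx : (b : ℝ) / log n < 1 / 2 := by rw [div_lt_iff₀ hL]; linarith
  have hc : 1 / (logb 2 n / b * log 2) = b / log n := by
    rw [logb]
    field_simp [(log_pos one_lt_two).ne']
  have hc₀ : 0 < logb 2 n / b := div_pos (div_pos hL (log_pos one_lt_two)) hb₀
  calc 1 / logb 2 (2 * (logb 2 n / b) / (logb 2 n / b + 1))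
      ≤ 1 / (1 - b / log n) := by
        gcongr
        · linarith
        · simpa [hc] using one_sub_inv_mul_log_two_le_logb_two_mul_div hc₀
    _ ≤ 1 + b / log n + 2 * (b / log n) ^ 2 :=
        one_div_one_sub_le_one_add_add_two_mul_sq hx.le
    _ = 1 + b / log n + 2 * b ^ 2 / log n ^ 2 := by ring

theorem stmt_12 (n b : ℕ) (hn : 8 ≤ n) (hb : 1 ≤ b) (hbn : (b : ℝ) < Real.log n / 2) :
    1 / Real.logb 2 (2 * (Real.logb 2 n / b) / ((Real.logb 2 n / b) + 1))
      ≤ 1 + (b : ℝ) / Real.log n + 2 * (b : ℝ) ^ 2 / (Real.log n) ^ 2 :=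
  stmt_12_general n b hb hbn
end

section
/- For all integers n ≥ 8 and 1 ≤ b < (ln n)/2, with c = log₂(n)/b and γ = (2c/(c+1))², log_γ(n·c^b) ≤ (1 + 2b/ln n)·(log₄(n) + b·log₄(log₂(n)/b)). -/
/-!
Write `L = ln n`, `c = log₂ n / b = L / (b ln 2)` and `d = 2c/(c+1)`, so that `γ = d²`. Both sides are
multiples of `ln (n c^b)`: the left side is `ln (n c^b) / ln γ`, the right side is
`(1 + 2b/L) · ln (n c^b) / ln 4`. It therefore suffices that `ln 4 ≤ (1 + 2b/L) ln γ`, i.e.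
`ln 2 ≤ (1 + 2b/L) ln d`. From `ln (1 + 1/c) ≤ 1/c` we get `ln d ≥ ln 2 - 1/c = ln 2 · (1 - b/L)`,
and `(1 + 2t)(1 - t) = 1 + t(1 - 2t) ≥ 1` for `t = b/L ∈ [0, 1/2]`.
-/

open Real

lemma Real.logb_le_mul_logb {x a a' k : ℝ} (hx : 0 ≤ log x) (ha : 0 < log a) (hk : 0 < k)
    (h : log a ≤ k * log a') : logb a' x ≤ k * logb a x := by
  have ha' : 0 < log a' := pos_of_mul_pos_right (ha.trans_le h) hk.le
  rw [logb, logb, mul_div_assoc', div_le_div_iff₀ ha' ha]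
  nlinarith

lemma log_two_sub_inv_le_log_two_mul_div_add_one {c : ℝ} (hc : 0 < c) :
    log 2 - c⁻¹ ≤ log (2 * c / (c + 1)) := by
  have hsplit : 2 * c / (c + 1) = 2 / (1 + c⁻¹) := by field_simp
  rw [hsplit, log_div two_ne_zero (by positivity)]
  linarith [log_le_sub_one_of_pos (by positivity : 0 < 1 + c⁻¹)]

lemma log_two_le_mul_log_two_mul_div_add_one {b L : ℝ} (hb : 0 < b) (hbL : 2 * b ≤ L) :
    log 2 ≤ (1 + 2 * b / L) * log (2 * (L / (b * log 2)) / (L / (b * log 2) + 1)) := by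
  have hlog2 : 0 < log 2 := log_pos one_lt_two
  have hL : 0 < L := by linarith
  have hlower := log_two_sub_inv_le_log_two_mul_div_add_one (c := L / (b * log 2)) (by positivity)
  rw [show (L / (b * log 2))⁻¹ = log 2 * (b / L) by field_simp] at hlower
  have ht : 2 * (b / L) ≤ 1 := by rwa [mul_div_assoc', div_le_one hL]
  rw [mul_div_assoc]
  calc log 2 ≤ (1 + 2 * (b / L)) * (log 2 - log 2 * (b / L)) := by
        nlinarith [mul_nonneg (div_nonneg hb.le hL.le) (sub_nonneg.2 ht)]
    _ ≤ _ := by gcongr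

theorem stmt_13_general (n b : ℕ) (hb : 1 ≤ b) (hbn : (b : ℝ) < Real.log n / 2) :
    Real.logb ((2 * (Real.logb 2 n / b) / ((Real.logb 2 n / b) + 1)) ^ 2)
        ((n : ℝ) * (Real.logb 2 n / b) ^ b)
      ≤ (1 + 2 * (b : ℝ) / Real.log n) *
          (Real.logb 4 n + b * Real.logb 4 (Real.logb 2 n / b)) := by
  have hb0 : (0 : ℝ) < b := by exact_mod_cast hb
  have hn1 : (1 : ℝ) ≤ n :=
    ((log_pos_iff (Nat.cast_nonneg n)).1 (by linarith)).le
  have hc : Real.logb 2 n / b = Real.log n / (b * Real.log 2) := by rw [logb, div_div, mul_comm]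
  have hc1 : 1 ≤ Real.log n / (b * Real.log 2) := by
    rw [one_le_div (by positivity)]
    nlinarith [log_two_lt_d9]
  have hkey := log_two_le_mul_log_two_mul_div_add_one hb0 (by linarith : 2 * (b : ℝ) ≤ Real.log n)
  rw [hc, ← logb_pow, ← logb_mul (by positivity) (by positivity)]
  apply Real.logb_le_mul_logb
  · exact log_nonneg (one_le_mul_of_one_le_of_one_le hn1 (one_le_pow₀ hc1))
  · exact log_pos (by norm_num)
  · positivity
  · rw [log_pow, show (4 : ℝ) = 2 ^ 2 by norm_num, log_pow]
    push_cast
    linarith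

theorem stmt_13 (n b : ℕ) (hn : 8 ≤ n) (hb : 1 ≤ b) (hbn : (b : ℝ) < Real.log n / 2) :
    Real.logb ((2 * (Real.logb 2 n / b) / ((Real.logb 2 n / b) + 1)) ^ 2)
        ((n : ℝ) * (Real.logb 2 n / b) ^ b)
      ≤ (1 + 2 * (b : ℝ) / Real.log n) *
          (Real.logb 4 n + b * Real.logb 4 (Real.logb 2 n / b)) :=
  stmt_13_general n b hb hbn
end

section
/- For all natural numbers k ≥ 5 and 1 ≤ b ≤ k/5, C(k + ⌊log₂ C(k,b)⌋ - b, b) > C(k, b), where C denotes the binomial coefficient. -/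
/-! Since `4 * b ≤ k`, we have `C(k, b) ≥ C(4b, b) ≥ 4 ^ b ≥ 2 ^ (b + 1)`, so `⌊log₂ C(k, b)⌋ ≥ b + 1`
and the upper argument `k + ⌊log₂ C(k, b)⌋ - b` exceeds `k`; and `n ↦ C(n, b)` is strictly
increasing on `n ≥ b` when `b ≥ 1`. -/

namespace Nat

/-- Iterating `C(m(k+1), k+1) ≥ m · C(mk, k)`, which follows from `(n+1) C(n, k) = C(n+1, k+1) (k+1)`. -/
theorem pow_le_choose_mul (m k : ℕ) : m ^ k ≤ (m * k).choose k := by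
  induction k with
  | zero => simp
  | succ k ih =>
    rcases Nat.eq_zero_or_pos m with rfl | hm
    · simp
    have hrec : m * (k + 1) * (m * (k + 1) - 1).choose k = (m * (k + 1)).choose (k + 1) * (k + 1) := by
      have := add_one_mul_choose_eq (m * (k + 1) - 1) k
      rwa [Nat.sub_add_cancel (Nat.mul_pos hm k.succ_pos)] at this
    have hstep : m * (m * k).choose k ≤ (m * (k + 1)).choose (k + 1) := by
      refine le_of_mul_le_mul_right ?_ (succ_pos k)
      calc m * (m * k).choose k * (k + 1) = m * (k + 1) * (m * k).choose k := by ring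
        _ ≤ m * (k + 1) * (m * (k + 1) - 1).choose k :=
          mul_le_mul_left _ (choose_le_choose k (by rw [mul_succ]; omega))
        _ = _ := hrec
    calc m ^ (k + 1) = m * m ^ k := pow_succ'
      _ ≤ m * (m * k).choose k := mul_le_mul_left m ih
      _ ≤ _ := hstep

theorem choose_lt_choose_of_lt {k n b : ℕ} (hb : 0 < b) (hbk : b ≤ k) (hkn : k < n) :
    k.choose b < n.choose b := by
  obtain ⟨b, rfl⟩ : ∃ c, b = c + 1 := exists_eq_add_one.mpr hb
  have hsucc : k.choose (b + 1) < (k + 1).choose (b + 1) := by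
    rw [choose_succ_succ']
    have := choose_pos (n := k) (k := b) (by omega)
    omega
  exact hsucc.trans_le (choose_le_choose _ hkn)

end Nat

theorem stmt_17_general (k b : ℕ) (hb : 1 ≤ b) (hbk : 5 * b ≤ k) :
    (k + Nat.log 2 (k.choose b) - b).choose b > k.choose b := by
  have hpow : 2 ^ (b + 1) ≤ k.choose b :=
    calc 2 ^ (b + 1) ≤ 2 ^ (2 * b) := Nat.pow_le_pow_right two_pos (by omega)
      _ = 4 ^ b := by rw [Nat.pow_mul]; norm_num
      _ ≤ (4 * b).choose b := Nat.pow_le_choose_mul 4 b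
      _ ≤ k.choose b := Nat.choose_le_choose b (by omega)
  have hlog : b + 1 ≤ Nat.log 2 (k.choose b) :=
    (Nat.le_log_iff_pow_le one_lt_two (Nat.choose_pos (by omega)).ne').mpr hpow
  exact Nat.choose_lt_choose_of_lt (by omega) (by omega) (by omega)

theorem stmt_17 (k b : ℕ) (hk : 5 ≤ k) (hb : 1 ≤ b) (hbk : 5 * b ≤ k) :
    (k + Nat.log 2 (k.choose b) - b).choose b > k.choose b :=
  stmt_17_general k b hb hbk
end

section
/- Suppose g_b : ℕ → ℝ satisfies g_b(t) > 2^{k-t}·C(t,b) - 2^b + 1 for all t, where k ≥ 5 and 1 ≤ b ≤ k/5 are natural numbers. Then for t̃ = k + ⌊log₂ C(k,b)⌋ - b, we have g_b(t̃) > 1. -/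
namespace Nat

theorem two_pow_le_centralBinom (n : ℕ) : 2 ^ n ≤ centralBinom n := by
  induction n with
  | zero => simp
  | succ n ih =>
    refine Nat.le_of_mul_le_mul_left ?_ n.succ_pos
    calc (n + 1) * 2 ^ (n + 1) ≤ 2 * (2 * n + 1) * 2 ^ n := by
          rw [pow_succ]; nlinarith [Nat.one_le_two_pow (n := n)]
      _ ≤ 2 * (2 * n + 1) * centralBinom n := by gcongr
      _ = (n + 1) * centralBinom (n + 1) := (succ_mul_centralBinom_succ n).symm

theorem two_pow_le_choose_of_two_mul_le {n b : ℕ} (h : 2 * b ≤ n) : 2 ^ b ≤ n.choose b :=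
  calc 2 ^ b ≤ centralBinom b := two_pow_le_centralBinom b
    _ = (2 * b).choose b := centralBinom_eq_two_mul_choose b
    _ ≤ n.choose b := choose_le_choose b h

theorem le_log_two_choose_of_two_mul_le {n b : ℕ} (h : 2 * b ≤ n) :
    b ≤ log 2 (n.choose b) :=
  le_log_of_pow_le one_lt_two (two_pow_le_choose_of_two_mul_le h)

end Nat

/-- With `L = ⌊log₂ C(k,b)⌋ ≥ b` and `t = k + L - b ≥ k`, the factor `2^(k-t) = 2^(b-L)` is exactly
compensated by `C(t,b) ≥ C(k,b) ≥ 2^L`. -/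
theorem two_pow_le_rpow_sub_mul_choose {k b : ℕ} (h : 2 * b ≤ k) :
    (2 : ℝ) ^ b ≤ (2 : ℝ) ^ ((k : ℝ) - ((k + Nat.log 2 (k.choose b) - b : ℕ) : ℝ)) *
      (((k + Nat.log 2 (k.choose b) - b).choose b : ℕ) : ℝ) := by
  set L := Nat.log 2 (k.choose b)
  set t := k + L - b
  have hbL : b ≤ L := Nat.le_log_two_choose_of_two_mul_le h
  have hexp : (2 : ℝ) ^ ((k : ℝ) - (t : ℝ)) = 2 ^ b / 2 ^ L := by
    have htb : (t : ℝ) = k + L - b := by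
      rw [eq_sub_iff_add_eq]; exact_mod_cast (show t + b = k + L by omega)
    rw [htb, show (k : ℝ) - (k + L - b) = b - L by ring,
      Real.rpow_sub two_pos, Real.rpow_natCast, Real.rpow_natCast]
  have hchoose : 2 ^ L ≤ t.choose b :=
    (Nat.pow_log_le_self 2 (Nat.choose_pos (by omega)).ne').trans
      (Nat.choose_le_choose b (by omega))
  rw [hexp, div_mul_eq_mul_div, le_div_iff₀ (by positivity)]
  gcongr
  exact_mod_cast hchoose

theorem stmt_18_general (k b : ℕ) (hbk : 5 * b ≤ k)
    (g : ℕ → ℝ)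
    (hg : ∀ t : ℕ, g t > (2 : ℝ) ^ ((k : ℝ) - (t : ℝ)) * ((t.choose b : ℕ) : ℝ)
      - 2 ^ b + 1) :
    g (k + Nat.log 2 (k.choose b) - b) > 1 := by
  have hbound := two_pow_le_rpow_sub_mul_choose (show 2 * b ≤ k by omega)
  linarith [hg (k + Nat.log 2 (k.choose b) - b)]

theorem stmt_18 (k b : ℕ) (hk : 5 ≤ k) (hb : 1 ≤ b) (hbk : 5 * b ≤ k)
    (g : ℕ → ℝ)
    (hg : ∀ t : ℕ, g t > (2 : ℝ) ^ ((k : ℝ) - (t : ℝ)) * ((t.choose b : ℕ) : ℝ)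
      - 2 ^ b + 1) :
    g (k + Nat.log 2 (k.choose b) - b) > 1 :=
  stmt_18_general k b hbk g hg
end

section
/- Let b ≥ 0 and c > 1, and for a nonzero natural-number vector k = (k₀,…,k_b) define S(k) = Σ_{i=0}^b c^{b-i}·k_i. Suppose k = Σ_{j=1}^d k^j is any decomposition into d nonnegative integer vectors, and for choice j the successor s_j has first coordinate k₀^j and i-th coordinate k_i^j + Σ_{v≠j} k_{i-1}^v for 1 ≤ i ≤ b. Then S(s_j) ≤ S(k) for every j. -/
/-!
The successor `s_j` is `k^j` plus the right shift of `∑_{v ≠ j} k^v`, and `S` is additive. A right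
shift moves the entry at index `i` onto the smaller weight `c^(b-i-1) ≤ c^(b-i)` and discards the
last entry, so it cannot increase `S`; adding `S(k^j)` back gives `S(s_j) ≤ S(k)`.
-/

open Finset

-- The `if` is `x` shifted one slot to the right, with its last entry dropped.
theorem sum_antitone_mul_shift_le {b : ℕ} {w : ℕ → ℝ} (hw : Antitone w) (hw0 : ∀ n, 0 ≤ w n)
    {x : Fin (b + 1) → ℝ} (hx : ∀ i, 0 ≤ x i) :
    ∑ i : Fin (b + 1), w i *
        (if (i : ℕ) = 0 then 0 else x ⟨(i : ℕ) - 1, lt_of_le_of_lt (Nat.sub_le _ 1) i.isLt⟩)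
      ≤ ∑ i : Fin (b + 1), w i * x i := by
  rw [Fin.sum_univ_succ, Fin.sum_univ_castSucc (f := fun i => w i * x i)]
  simp only [Fin.val_zero, if_pos, mul_zero, zero_add, Fin.val_succ, Nat.succ_ne_zero,
    if_false, Nat.add_sub_cancel]
  calc ∑ i : Fin b, w (i + 1) * x i.castSucc
      ≤ ∑ i : Fin b, w i * x i.castSucc :=
        sum_le_sum fun i _ => mul_le_mul_of_nonneg_right (hw (Nat.le_succ _)) (hx _)
    _ ≤ _ := le_add_of_nonneg_right (mul_nonneg (hw0 _) (hx _))

theorem stmt_19_general (b d : ℕ) (c : ℝ) (hc : 1 < c)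
    (kdec : Fin d → Fin (b + 1) → ℕ) :
    ∀ j : Fin d,
      ∑ i : Fin (b + 1), c ^ (b - (i : ℕ)) *
        (if (i : ℕ) = 0 then (kdec j i : ℝ)
         else (kdec j i : ℝ) +
           ∑ v ∈ Finset.univ.erase j,
             (kdec v ⟨(i : ℕ) - 1, lt_of_le_of_lt (Nat.sub_le _ 1) i.isLt⟩ : ℝ))
      ≤ ∑ i : Fin (b + 1), c ^ (b - (i : ℕ)) * ((∑ v, kdec v i : ℕ) : ℝ) := by
  intro j
  set others : Fin (b + 1) → ℝ := fun i => ∑ v ∈ univ.erase j, (kdec v i : ℝ)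
  have hweight : Antitone fun n : ℕ => c ^ (b - n) :=
    fun m n hmn => pow_le_pow_right₀ hc.le (Nat.sub_le_sub_left hmn b)
  have hshift := sum_antitone_mul_shift_le hweight (fun n => by positivity)
    (x := others) fun i => sum_nonneg fun v _ => Nat.cast_nonneg _
  calc _ = ∑ i : Fin (b + 1), c ^ (b - (i : ℕ)) * (kdec j i : ℝ) +
          ∑ i : Fin (b + 1), c ^ (b - (i : ℕ)) *
            (if (i : ℕ) = 0 then 0
             else others ⟨(i : ℕ) - 1, lt_of_le_of_lt (Nat.sub_le _ 1) i.isLt⟩) := by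
        rw [← sum_add_distrib]
        refine sum_congr rfl fun i _ => ?_
        split_ifs <;> ring
    _ ≤ ∑ i : Fin (b + 1), c ^ (b - (i : ℕ)) * (kdec j i : ℝ) +
          ∑ i : Fin (b + 1), c ^ (b - (i : ℕ)) * others i := by gcongr
    _ = _ := by
        rw [← sum_add_distrib]
        refine sum_congr rfl fun i _ => ?_
        rw [Nat.cast_sum, ← add_sum_erase _ _ (mem_univ j), mul_add]

theorem stmt_19 (b d : ℕ) (c : ℝ) (hc : 1 < c)
    (kdec : Fin d → Fin (b + 1) → ℕ)
    (hk : (fun i => ∑ j, kdec j i) ≠ (0 : Fin (b + 1) → ℕ)) :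
    ∀ j : Fin d,
      ∑ i : Fin (b + 1), c ^ (b - (i : ℕ)) *
        (if (i : ℕ) = 0 then (kdec j i : ℝ)
         else (kdec j i : ℝ) +
           ∑ v ∈ Finset.univ.erase j,
             (kdec v ⟨(i : ℕ) - 1, lt_of_le_of_lt (Nat.sub_le _ 1) i.isLt⟩ : ℝ))
      ≤ ∑ i : Fin (b + 1), c ^ (b - (i : ℕ)) * ((∑ v, kdec v i : ℕ) : ℝ) :=
  stmt_19_general b d c hc kdec
end
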